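/- arXiv:1905.10600 — 10 statements merged into one kernel-verified Lean document; each statement's English description precedes it below -/
import Mathlib

section
/- Let R be a unital (not necessarily commutative) ring and ψ₁, ψ₂, ψ₃, ψ₄, G₁, Δ ∈ R. Suppose a := ψ₃*G₁ + ψ₄ is a unit and b := ψ₄ − Δ*ψ₂ is a unit. Define M := (ψ₁*G₁ + ψ₂)*a⁻¹ and G₂ := −b⁻¹*(ψ₃ − Δ*ψ₁). Then (1 − Δ*M)*a = b*(1 − G₂*G₁); consequently, 1 − Δ*M is a unit if and only if 1 − G₂*G₁ is a unit. -/
theorem isUnit_iff_of_mul_eq_mul {M : Type*} [Monoid M] {x y a b : M} (ha : IsUnit a)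
    (hb : IsUnit b) (h : x * a = b * y) : IsUnit x ↔ IsUnit y := by
  rw [← ha.mul_right_iff, h, hb.mul_left_iff]

namespace Ring

variable {R : Type*} [Ring R]

theorem one_sub_mul_inverse_mul {a : R} (ha : IsUnit a) (y : R) :
    (1 - y * Ring.inverse a) * a = a - y := by
  rw [sub_mul, one_mul, inverse_mul_cancel_right a y ha]

theorem mul_one_sub_neg_inverse_mul_mul {b : R} (hb : IsUnit b) (c g : R) :
    b * (1 - -(Ring.inverse b * c) * g) = b + c * g := by
  rw [neg_mul, sub_neg_eq_add, mul_add, mul_one, mul_assoc (Ring.inverse b),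
    mul_inverse_cancel_left b _ hb]

end Ring

/-- Chain-scattering identity: with `a = ψ₃G₁ + ψ₄` and `b = ψ₄ − Δψ₂` units,
`M = (ψ₁G₁ + ψ₂)a⁻¹` and `G₂ = −b⁻¹(ψ₃ − Δψ₁)`, one has
`(1 − ΔM)a = b(1 − G₂G₁)`; hence `1 − ΔM` is a unit iff `1 − G₂G₁` is. -/
theorem chain_scattering_identity
    {R : Type*} [Ring R] (ψ₁ ψ₂ ψ₃ ψ₄ G₁ Δ : R)
    (ha : IsUnit (ψ₃ * G₁ + ψ₄)) (hb : IsUnit (ψ₄ - Δ * ψ₂)) :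
    (1 - Δ * ((ψ₁ * G₁ + ψ₂) * Ring.inverse (ψ₃ * G₁ + ψ₄))) * (ψ₃ * G₁ + ψ₄) =
      (ψ₄ - Δ * ψ₂) *
        (1 - (-(Ring.inverse (ψ₄ - Δ * ψ₂) * (ψ₃ - Δ * ψ₁))) * G₁) ∧
    (IsUnit (1 - Δ * ((ψ₁ * G₁ + ψ₂) * Ring.inverse (ψ₃ * G₁ + ψ₄))) ↔
      IsUnit (1 - (-(Ring.inverse (ψ₄ - Δ * ψ₂) * (ψ₃ - Δ * ψ₁))) * G₁)) := by
  -- Both sides cancel their inverse and become `ψ₃ G₁ + ψ₄ - Δ (ψ₁ G₁ + ψ₂)`.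
  have key : (1 - Δ * ((ψ₁ * G₁ + ψ₂) * Ring.inverse (ψ₃ * G₁ + ψ₄))) * (ψ₃ * G₁ + ψ₄) =
      (ψ₄ - Δ * ψ₂) * (1 - (-(Ring.inverse (ψ₄ - Δ * ψ₂) * (ψ₃ - Δ * ψ₁))) * G₁) := by
    rw [← mul_assoc Δ, Ring.one_sub_mul_inverse_mul ha, Ring.mul_one_sub_neg_inverse_mul_mul hb]
    noncomm_ring
  exact ⟨key, isUnit_iff_of_mul_eq_mul ha hb key⟩
end

section
/- Let R be a unital ring and ψ₁, ψ₂, ψ₃, ψ₄, Δ ∈ R with ψ₄ a unit. Set d := ψ₂*ψ₄⁻¹ and suppose 1 − Δ*d and 1 − d*Δ are units. Define G₂ := −ψ₄⁻¹*(1 − Δ*d)⁻¹*(ψ₃ − Δ*ψ₁), ζ₁ := ψ₁ + ψ₂*G₂, and ζ₂ := ψ₃ + ψ₄*G₂. Then ζ₁ = (1 − d*Δ)⁻¹*(ψ₁ − d*ψ₃) and ζ₂ = Δ*ζ₁. -/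
/-!
With `d = ψ₂ψ₄⁻¹` and `y = (1 - Δd)⁻¹(ψ₃ - Δψ₁)` one has `ψ₂G₂ = -dy` and `ψ₄G₂ = -y`.
The formula for `ζ₁ = ψ₁ - dy` is then the push-through identity `d(1 - Δd)⁻¹ = (1 - dΔ)⁻¹d`,
and `ζ₂ = ψ₃ - y = Δζ₁` holds because `(1 - Δd)y = ψ₃ - Δψ₁`. By Jacobson's lemma `1 - Δd`
is a unit as soon as `1 - dΔ` is.
-/

section

variable {R : Type*} [Ring R]

/-- Jacobson's lemma, read off the fact that `a * b` and `b * a` have the same nonzero spectrum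
over `ℤ`. -/
theorem isUnit_one_sub_mul_comm (a b : R) : IsUnit (1 - a * b) ↔ IsUnit (1 - b * a) := by
  simpa [spectrum.mem_iff, Algebra.algebraMap_eq_smul_one] using
    (spectrum.unit_mem_mul_comm (R := ℤ) (a := a) (b := b) (r := 1)).not

/-- The push-through identity; it needs no hypothesis since both inverses are junk `0` together. -/
theorem Ring.mul_inverse_one_sub_mul_comm (a b : R) :
    a * Ring.inverse (1 - b * a) = Ring.inverse (1 - a * b) * a := by
  by_cases hab : IsUnit (1 - a * b)
  · have hba : IsUnit (1 - b * a) := (isUnit_one_sub_mul_comm a b).mp hab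
    apply hab.mul_left_cancel
    calc (1 - a * b) * (a * Ring.inverse (1 - b * a))
        = a * ((1 - b * a) * Ring.inverse (1 - b * a)) := by noncomm_ring
      _ = (1 - a * b) * (Ring.inverse (1 - a * b) * a) := by
        rw [Ring.mul_inverse_cancel _ hba, Ring.mul_inverse_cancel_left _ _ hab, mul_one]
  · have hba : ¬IsUnit (1 - b * a) := mt (isUnit_one_sub_mul_comm a b).mpr hab
    rw [Ring.inverse_non_unit _ hab, Ring.inverse_non_unit _ hba, mul_zero, zero_mul]

theorem sub_mul_inverse_one_sub_mul_sub (d Δ a b : R) (h : IsUnit (1 - d * Δ)) :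
    a - d * (Ring.inverse (1 - Δ * d) * (b - Δ * a)) =
      Ring.inverse (1 - d * Δ) * (a - d * b) :=
  calc a - d * (Ring.inverse (1 - Δ * d) * (b - Δ * a))
      = a - Ring.inverse (1 - d * Δ) * (d * (b - Δ * a)) := by
        rw [← mul_assoc, Ring.mul_inverse_one_sub_mul_comm, mul_assoc]
    _ = Ring.inverse (1 - d * Δ) * ((1 - d * Δ) * a - d * (b - Δ * a)) := by
        rw [mul_sub _ ((1 - d * Δ) * a), Ring.inverse_mul_cancel_left _ _ h]
    _ = Ring.inverse (1 - d * Δ) * (a - d * b) := by noncomm_ring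

theorem sub_inverse_one_sub_mul_mul_sub (d Δ a b : R) (h : IsUnit (1 - Δ * d)) :
    b - Ring.inverse (1 - Δ * d) * (b - Δ * a) =
      Δ * (a - d * (Ring.inverse (1 - Δ * d) * (b - Δ * a))) := by
  set y := Ring.inverse (1 - Δ * d) * (b - Δ * a)
  calc b - y = (b - Δ * a) - (1 - Δ * d) * y + Δ * (a - d * y) := by noncomm_ring
    _ = Δ * (a - d * y) := by rw [Ring.mul_inverse_cancel_left _ _ h, sub_self, zero_add]

end

theorem graph_symbol_identities_general
    {R : Type*} [Ring R] (ψ₁ ψ₂ ψ₃ ψ₄ Δ : R) (hψ₄ : IsUnit ψ₄)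
    (h₂ : IsUnit (1 - (ψ₂ * Ring.inverse ψ₄) * Δ)) :
    ψ₁ + ψ₂ * (-(Ring.inverse ψ₄ * Ring.inverse (1 - Δ * (ψ₂ * Ring.inverse ψ₄)) *
        (ψ₃ - Δ * ψ₁))) =
      Ring.inverse (1 - (ψ₂ * Ring.inverse ψ₄) * Δ) *
        (ψ₁ - (ψ₂ * Ring.inverse ψ₄) * ψ₃) ∧
    ψ₃ + ψ₄ * (-(Ring.inverse ψ₄ * Ring.inverse (1 - Δ * (ψ₂ * Ring.inverse ψ₄)) *
        (ψ₃ - Δ * ψ₁))) =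
      Δ * (ψ₁ + ψ₂ * (-(Ring.inverse ψ₄ *
        Ring.inverse (1 - Δ * (ψ₂ * Ring.inverse ψ₄)) * (ψ₃ - Δ * ψ₁)))) := by
  set d := ψ₂ * Ring.inverse ψ₄
  set y := Ring.inverse (1 - Δ * d) * (ψ₃ - Δ * ψ₁)
  have h₁ : IsUnit (1 - Δ * d) := (isUnit_one_sub_mul_comm _ _).mpr h₂
  have hψ₂G₂ :
      ψ₂ * -(Ring.inverse ψ₄ * Ring.inverse (1 - Δ * d) * (ψ₃ - Δ * ψ₁)) = -(d * y) := by
    simp only [d, y, mul_neg, mul_assoc]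
  have hψ₄G₂ : ψ₄ * -(Ring.inverse ψ₄ * Ring.inverse (1 - Δ * d) * (ψ₃ - Δ * ψ₁)) = -y := by
    rw [mul_neg, mul_assoc, Ring.mul_inverse_cancel_left _ _ hψ₄]
  rw [hψ₂G₂, hψ₄G₂, ← sub_eq_add_neg, ← sub_eq_add_neg]
  exact ⟨sub_mul_inverse_one_sub_mul_sub d Δ ψ₁ ψ₃ h₂,
    sub_inverse_one_sub_mul_mul_sub d Δ ψ₁ ψ₃ h₁⟩

/-- Graph-symbol identities for the constructed destabilizing system: with
`d = ψ₂ψ₄⁻¹`, `G₂ = −ψ₄⁻¹(1 − Δd)⁻¹(ψ₃ − Δψ₁)`, `ζ₁ = ψ₁ + ψ₂G₂` and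
`ζ₂ = ψ₃ + ψ₄G₂`, one has `ζ₁ = (1 − dΔ)⁻¹(ψ₁ − dψ₃)` and `ζ₂ = Δζ₁`. -/
theorem graph_symbol_identities
    {R : Type*} [Ring R] (ψ₁ ψ₂ ψ₃ ψ₄ Δ : R) (hψ₄ : IsUnit ψ₄)
    (h₁ : IsUnit (1 - Δ * (ψ₂ * Ring.inverse ψ₄)))
    (h₂ : IsUnit (1 - (ψ₂ * Ring.inverse ψ₄) * Δ)) :
    ψ₁ + ψ₂ * (-(Ring.inverse ψ₄ * Ring.inverse (1 - Δ * (ψ₂ * Ring.inverse ψ₄)) *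
        (ψ₃ - Δ * ψ₁))) =
      Ring.inverse (1 - (ψ₂ * Ring.inverse ψ₄) * Δ) *
        (ψ₁ - (ψ₂ * Ring.inverse ψ₄) * ψ₃) ∧
    ψ₃ + ψ₄ * (-(Ring.inverse ψ₄ * Ring.inverse (1 - Δ * (ψ₂ * Ring.inverse ψ₄)) *
        (ψ₃ - Δ * ψ₁))) =
      Δ * (ψ₁ + ψ₂ * (-(Ring.inverse ψ₄ *
        Ring.inverse (1 - Δ * (ψ₂ * Ring.inverse ψ₄)) * (ψ₃ - Δ * ψ₁)))) :=
  graph_symbol_identities_general ψ₁ ψ₂ ψ₃ ψ₄ Δ hψ₄ h₂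
end

section
/- Let R be a unital ring and ψ₁, ψ₂, ψ₃, ψ₄, G₁, Δ ∈ R. Suppose a := ψ₃*G₁ + ψ₄ and b := ψ₄ − Δ*ψ₂ are units, define M := (ψ₁*G₁ + ψ₂)*a⁻¹ and G₂ := −b⁻¹*(ψ₃ − Δ*ψ₁), and suppose 1 − Δ*M is a unit. Then 1 − G₂*G₁ is a unit and (1 − G₂*G₁)⁻¹*G₂ = −a⁻¹*(1 − Δ*M)⁻¹*(ψ₃ − Δ*ψ₁). -/
/-- Closed-loop identity: with `a = ψ₃G₁ + ψ₄`, `b = ψ₄ − Δψ₂` units,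
`M = (ψ₁G₁ + ψ₂)a⁻¹`, `G₂ = −b⁻¹(ψ₃ − Δψ₁)`, and `1 − ΔM` a unit,
`1 − G₂G₁` is a unit and `(1 − G₂G₁)⁻¹G₂ = −a⁻¹(1 − ΔM)⁻¹(ψ₃ − Δψ₁)`. -/
theorem closed_loop_chain_scattering_identity
    {R : Type*} [Ring R] (ψ₁ ψ₂ ψ₃ ψ₄ G₁ Δ : R)
    (ha : IsUnit (ψ₃ * G₁ + ψ₄)) (hb : IsUnit (ψ₄ - Δ * ψ₂))
    (hM : IsUnit (1 - Δ * ((ψ₁ * G₁ + ψ₂) * Ring.inverse (ψ₃ * G₁ + ψ₄)))) :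
    IsUnit (1 - (-(Ring.inverse (ψ₄ - Δ * ψ₂) * (ψ₃ - Δ * ψ₁))) * G₁) ∧
    Ring.inverse (1 - (-(Ring.inverse (ψ₄ - Δ * ψ₂) * (ψ₃ - Δ * ψ₁))) * G₁) *
        (-(Ring.inverse (ψ₄ - Δ * ψ₂) * (ψ₃ - Δ * ψ₁))) =
      -(Ring.inverse (ψ₃ * G₁ + ψ₄) *
        Ring.inverse (1 - Δ * ((ψ₁ * G₁ + ψ₂) * Ring.inverse (ψ₃ * G₁ + ψ₄))) *
        (ψ₃ - Δ * ψ₁)) := by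
  set a := ψ₃ * G₁ + ψ₄ with hadef
  set b := ψ₄ - Δ * ψ₂ with hbdef
  set m := 1 - Δ * ((ψ₁ * G₁ + ψ₂) * Ring.inverse a) with hmdef
  have hba : Ring.inverse b * b = 1 := Ring.inverse_mul_cancel b hb
  have hab : b * Ring.inverse b = 1 := Ring.mul_inverse_cancel b hb
  have haa : Ring.inverse a * a = 1 := Ring.inverse_mul_cancel a ha
  have haa' : a * Ring.inverse a = 1 := Ring.mul_inverse_cancel a ha
  have hmm' : m * Ring.inverse m = 1 := Ring.mul_inverse_cancel m hM
  have key : 1 - (-(Ring.inverse b * (ψ₃ - Δ * ψ₁))) * G₁ = Ring.inverse b * (m * a) := by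
    have h1 : m * a = b + (ψ₃ - Δ * ψ₁) * G₁ := by
      have h2 : Δ * ((ψ₁ * G₁ + ψ₂) * Ring.inverse a) * a = Δ * (ψ₁ * G₁ + ψ₂) := by
        rw [mul_assoc, mul_assoc, haa, mul_one]
      rw [hmdef, sub_mul, one_mul, h2, hadef, hbdef]; noncomm_ring
    rw [h1, mul_add, hba]; noncomm_ring
  have uniq : ∀ x y : R, IsUnit x → x * y = 1 → Ring.inverse x = y := by
    intro x y hx h
    calc Ring.inverse x = Ring.inverse x * (x * y) := by rw [h, mul_one]
      _ = y := by rw [← mul_assoc, Ring.inverse_mul_cancel x hx, one_mul]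
  constructor
  · rw [key]
    exact (isUnit_ringInverse.mpr hb).mul (hM.mul ha)
  · have hinv : Ring.inverse (1 - (-(Ring.inverse b * (ψ₃ - Δ * ψ₁))) * G₁)
        = Ring.inverse a * (Ring.inverse m * b) := by
      apply uniq _ _ (by rw [key]; exact (isUnit_ringInverse.mpr hb).mul (hM.mul ha))
      rw [key]
      have h3 : m * a * (Ring.inverse a * (Ring.inverse m * b)) = b := by
        rw [mul_assoc m a, ← mul_assoc a, haa', one_mul, ← mul_assoc m, hmm', one_mul]
      rw [mul_assoc, h3, hba]
    rw [hinv, mul_neg, neg_inj, mul_assoc, mul_assoc (Ring.inverse m), ← mul_assoc b,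
      hab, one_mul, ← mul_assoc]
end

section
/- Let H and K be complex Hilbert spaces, G₁ : H →L[ℂ] K and G₂ : K →L[ℂ] H bounded linear operators, Π₁₁ : K →L[ℂ] K and Π₂₂ : H →L[ℂ] H bounded self-adjoint operators, and Π₁₂ : H →L[ℂ] K a bounded operator. Define σ(v, w) := re⟪v, Π₁₁ v⟫ + 2·re⟪v, Π₁₂ w⟫ + re⟪w, Π₂₂ w⟫ for v ∈ K, w ∈ H. Suppose there exists ε > 0 such that σ(G₁ u, u) ≤ −ε‖u‖² for all u ∈ H, and σ(v, G₂ v) ≥ 0 for all v ∈ K. Then there exists c > 0 such that ‖u − G₂ (G₁ u)‖ ≥ c‖u‖ for all u ∈ H. -/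
/-! With `v = G₁ u` and `e = u − G₂ v`, the two IQCs give `ε‖u‖² ≤ σ(v, G₂ v) − σ(v, u)`.
Since `σ(v, ·)` is a bounded quadratic form, this difference is at most a constant times
`‖u‖ ‖e‖`; dividing by `‖u‖` bounds `‖e‖` below by a multiple of `‖u‖`. -/

open scoped InnerProductSpace

open RCLike in
def iqcForm {𝕜 E F : Type*} [RCLike 𝕜] [NormedAddCommGroup E] [InnerProductSpace 𝕜 E]
    [NormedAddCommGroup F] [InnerProductSpace 𝕜 F]
    (Q₁₁ : F →L[𝕜] F) (Q₁₂ : E →L[𝕜] F) (Q₂₂ : E →L[𝕜] E) (v : F) (w : E) : ℝ :=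
  re ⟪v, Q₁₁ v⟫_𝕜 + 2 * re ⟪v, Q₁₂ w⟫_𝕜 + re ⟪w, Q₂₂ w⟫_𝕜

section

variable {𝕜 E F : Type*} [RCLike 𝕜] [NormedAddCommGroup E] [InnerProductSpace 𝕜 E]
  [NormedAddCommGroup F] [InnerProductSpace 𝕜 F]

theorem ContinuousLinearMap.norm_inner_map_self_sub_inner_map_self_le (A : E →L[𝕜] E) (x y : E) :
    ‖⟪x, A x⟫_𝕜 - ⟪y, A y⟫_𝕜‖ ≤ ‖A‖ * (‖x‖ + ‖y‖) * ‖x - y‖ := by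
  have split : ⟪x, A x⟫_𝕜 - ⟪y, A y⟫_𝕜 = ⟪x - y, A x⟫_𝕜 + ⟪y, A (x - y)⟫_𝕜 := by
    simp only [map_sub, inner_sub_left, inner_sub_right]
    ring
  calc ‖⟪x, A x⟫_𝕜 - ⟪y, A y⟫_𝕜‖ ≤ ‖x - y‖ * ‖A x‖ + ‖y‖ * ‖A (x - y)‖ := by
        rw [split]
        exact (norm_add_le _ _).trans
          (add_le_add (norm_inner_le_norm _ _) (norm_inner_le_norm _ _))
    _ ≤ ‖x - y‖ * (‖A‖ * ‖x‖) + ‖y‖ * (‖A‖ * ‖x - y‖) := by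
        gcongr <;> exact A.le_opNorm _
    _ = ‖A‖ * (‖x‖ + ‖y‖) * ‖x - y‖ := by ring

theorem iqcForm_sub_iqcForm_le (Q₁₁ : F →L[𝕜] F) (Q₁₂ : E →L[𝕜] F) (Q₂₂ : E →L[𝕜] E)
    (v : F) (w w' : E) :
    iqcForm Q₁₁ Q₁₂ Q₂₂ v w - iqcForm Q₁₁ Q₁₂ Q₂₂ v w' ≤
      (2 * ‖Q₁₂‖ * ‖v‖ + ‖Q₂₂‖ * (‖w‖ + ‖w'‖)) * ‖w - w'‖ := by
  have cross : RCLike.re ⟪v, Q₁₂ w⟫_𝕜 - RCLike.re ⟪v, Q₁₂ w'⟫_𝕜 ≤ ‖Q₁₂‖ * ‖v‖ * ‖w - w'‖ := by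
    rw [← map_sub, ← inner_sub_right, ← map_sub]
    calc RCLike.re ⟪v, Q₁₂ (w - w')⟫_𝕜 ≤ ‖v‖ * ‖Q₁₂ (w - w')‖ :=
          (RCLike.re_le_norm _).trans (norm_inner_le_norm _ _)
      _ ≤ ‖v‖ * (‖Q₁₂‖ * ‖w - w'‖) := by gcongr; exact Q₁₂.le_opNorm _
      _ = ‖Q₁₂‖ * ‖v‖ * ‖w - w'‖ := by ring
  have diagonal : RCLike.re ⟪w, Q₂₂ w⟫_𝕜 - RCLike.re ⟪w', Q₂₂ w'⟫_𝕜 ≤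
      ‖Q₂₂‖ * (‖w‖ + ‖w'‖) * ‖w - w'‖ := by
    rw [← map_sub]
    exact (RCLike.re_le_norm _).trans (Q₂₂.norm_inner_map_self_sub_inner_map_self_le w w')
  unfold iqcForm
  linarith

end

theorem exists_pos_norm_ge_mul_norm_of_mul_sq_le {E F : Type*} [SeminormedAddCommGroup E]
    [SeminormedAddCommGroup F] (f : E → F) {ε C : ℝ} (hε : 0 < ε) (hC : 0 ≤ C)
    (h : ∀ u, ε * ‖u‖ ^ 2 ≤ C * ‖u‖ * ‖f u‖) :
    ∃ c : ℝ, 0 < c ∧ ∀ u, ‖f u‖ ≥ c * ‖u‖ := by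
  refine ⟨ε / (C + 1), by positivity, fun u => ?_⟩
  rw [ge_iff_le, div_mul_eq_mul_div, div_le_iff₀ (by positivity)]
  rcases (norm_nonneg u).eq_or_lt with hu | hu
  · rw [← hu, mul_zero]
    positivity
  · have cancelled : ε * ‖u‖ ≤ C * ‖f u‖ := by
      refine le_of_mul_le_mul_right ?_ hu
      linarith [h u]
    nlinarith [norm_nonneg (f u)]

theorem iqc_return_difference_bounded_below_general
    {H K : Type*} [NormedAddCommGroup H] [InnerProductSpace ℂ H]
    [NormedAddCommGroup K] [InnerProductSpace ℂ K]
    (G₁ : H →L[ℂ] K) (G₂ : K →L[ℂ] H)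
    (Q₁₁ : K →L[ℂ] K) (Q₂₂ : H →L[ℂ] H) (Q₁₂ : H →L[ℂ] K)
    (ε : ℝ) (hε : 0 < ε)
    (hG₁ : ∀ u : H,
      (⟪G₁ u, Q₁₁ (G₁ u)⟫_ℂ).re + 2 * (⟪G₁ u, Q₁₂ u⟫_ℂ).re + (⟪u, Q₂₂ u⟫_ℂ).re ≤
        -ε * ‖u‖ ^ 2)
    (hG₂ : ∀ v : K,
      (⟪v, Q₁₁ v⟫_ℂ).re + 2 * (⟪v, Q₁₂ (G₂ v)⟫_ℂ).re + (⟪G₂ v, Q₂₂ (G₂ v)⟫_ℂ).re ≥ 0) :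
    ∃ c : ℝ, 0 < c ∧ ∀ u : H, ‖u - G₂ (G₁ u)‖ ≥ c * ‖u‖ := by
  refine exists_pos_norm_ge_mul_norm_of_mul_sq_le (fun u => u - G₂ (G₁ u)) hε
    (C := 2 * ‖Q₁₂‖ * ‖G₁‖ + ‖Q₂₂‖ * (‖G₂‖ * ‖G₁‖ + 1)) (by positivity) fun u => ?_
  have hv : ‖G₁ u‖ ≤ ‖G₁‖ * ‖u‖ := G₁.le_opNorm u
  have hw : ‖G₂ (G₁ u)‖ ≤ ‖G₂‖ * ‖G₁‖ * ‖u‖ :=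
    (G₂.le_opNorm_of_le hv).trans_eq (mul_assoc ..).symm
  have strict : iqcForm Q₁₁ Q₁₂ Q₂₂ (G₁ u) u ≤ -ε * ‖u‖ ^ 2 := hG₁ u
  have complementary : 0 ≤ iqcForm Q₁₁ Q₁₂ Q₂₂ (G₁ u) (G₂ (G₁ u)) := hG₂ (G₁ u)
  calc ε * ‖u‖ ^ 2
      ≤ iqcForm Q₁₁ Q₁₂ Q₂₂ (G₁ u) (G₂ (G₁ u)) - iqcForm Q₁₁ Q₁₂ Q₂₂ (G₁ u) u := by linarith
    _ ≤ (2 * ‖Q₁₂‖ * ‖G₁ u‖ + ‖Q₂₂‖ * (‖G₂ (G₁ u)‖ + ‖u‖)) * ‖G₂ (G₁ u) - u‖ :=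
        iqcForm_sub_iqcForm_le _ _ _ _ _ _
    _ ≤ (2 * ‖Q₁₂‖ * (‖G₁‖ * ‖u‖) + ‖Q₂₂‖ * (‖G₂‖ * ‖G₁‖ * ‖u‖ + ‖u‖)) * ‖u - G₂ (G₁ u)‖ := by
        rw [norm_sub_rev]
        gcongr
    _ = (2 * ‖Q₁₂‖ * ‖G₁‖ + ‖Q₂₂‖ * (‖G₂‖ * ‖G₁‖ + 1)) * ‖u‖ * ‖u - G₂ (G₁ u)‖ := by
        ring

/-- IQC feedback-stability core bound: if `G₁` satisfies the strict IQC
`σ(G₁u, u) ≤ −ε‖u‖²` and `G₂` the complementary IQC `σ(v, G₂v) ≥ 0` for the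
quadratic form `σ(v,w) = re⟪v, Q₁₁v⟫ + 2 re⟪v, Q₁₂w⟫ + re⟪w, Q₂₂w⟫` of the
self-adjoint block multiplier `Π = [[Q₁₁, Q₁₂],[Q₁₂*, Q₂₂]]`, then `I − G₂G₁`
is bounded below. -/
theorem iqc_return_difference_bounded_below
    {H K : Type*} [NormedAddCommGroup H] [InnerProductSpace ℂ H] [CompleteSpace H]
    [NormedAddCommGroup K] [InnerProductSpace ℂ K] [CompleteSpace K]
    (G₁ : H →L[ℂ] K) (G₂ : K →L[ℂ] H)
    (Q₁₁ : K →L[ℂ] K) (Q₂₂ : H →L[ℂ] H) (Q₁₂ : H →L[ℂ] K)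
    (h₁₁ : IsSelfAdjoint Q₁₁) (h₂₂ : IsSelfAdjoint Q₂₂)
    (ε : ℝ) (hε : 0 < ε)
    (hG₁ : ∀ u : H,
      (⟪G₁ u, Q₁₁ (G₁ u)⟫_ℂ).re + 2 * (⟪G₁ u, Q₁₂ u⟫_ℂ).re + (⟪u, Q₂₂ u⟫_ℂ).re ≤
        -ε * ‖u‖ ^ 2)
    (hG₂ : ∀ v : K,
      (⟪v, Q₁₁ v⟫_ℂ).re + 2 * (⟪v, Q₁₂ (G₂ v)⟫_ℂ).re + (⟪G₂ v, Q₂₂ (G₂ v)⟫_ℂ).re ≥ 0) :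
    ∃ c : ℝ, 0 < c ∧ ∀ u : H, ‖u - G₂ (G₁ u)‖ ≥ c * ‖u‖ :=
  iqc_return_difference_bounded_below_general G₁ G₂ Q₁₁ Q₂₂ Q₁₂ ε hε hG₁ hG₂
end

section
/- Let H be a complex Hilbert space and G₁, G₂ : H →L[ℂ] H bounded linear operators. Suppose there exists ε > 0 such that re⟪u, G₁ u⟫ ≥ ε‖u‖² for all u ∈ H (G₁ input strictly passive), and re⟪v, G₂ v⟫ ≥ 0 for all v ∈ H (G₂ passive). Then ε‖u‖² ≤ ‖G₁ u‖ · ‖(1 + G₂∘G₁) u‖ for all u ∈ H; in particular, if ‖G₁‖ ≤ γ then ‖(1 + G₂∘G₁) u‖ ≥ (ε/γ)‖u‖ for all u, uniformly over all passive G₂. -/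
open scoped InnerProductSpace

/-- If `G₁` is input strictly passive and `G₂` is passive, then
`ε‖u‖² ≤ ‖G₁u‖·‖(1 + G₂G₁)u‖`; in particular, if `‖G₁‖ ≤ γ` then the
return-difference operator `1 + G₂G₁` is bounded below by `ε/γ`,
uniformly over all passive `G₂`. -/
theorem passivity_return_difference_bound
    {H : Type*} [NormedAddCommGroup H] [InnerProductSpace ℂ H] [CompleteSpace H]
    (G₁ G₂ : H →L[ℂ] H) (ε : ℝ) (hε : 0 < ε)
    (hG₁ : ∀ u : H, (⟪u, G₁ u⟫_ℂ).re ≥ ε * ‖u‖ ^ 2)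
    (hG₂ : ∀ v : H, (⟪v, G₂ v⟫_ℂ).re ≥ 0) :
    (∀ u : H, ε * ‖u‖ ^ 2 ≤ ‖G₁ u‖ * ‖(1 + G₂ * G₁) u‖) ∧
    (∀ γ : ℝ, ‖G₁‖ ≤ γ → ∀ u : H, ‖(1 + G₂ * G₁) u‖ ≥ (ε / γ) * ‖u‖) := by
  have key : ∀ u : H, ε * ‖u‖ ^ 2 ≤ ‖G₁ u‖ * ‖(1 + G₂ * G₁) u‖ := by
    intro u
    have h1 : ((1 + G₂ * G₁) u : H) = u + G₂ (G₁ u) := by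
      simp [ContinuousLinearMap.add_apply, ContinuousLinearMap.mul_apply]
    have h2 : (⟪G₁ u, (1 + G₂ * G₁) u⟫_ℂ).re
        = (⟪G₁ u, u⟫_ℂ).re + (⟪G₁ u, G₂ (G₁ u)⟫_ℂ).re := by
      rw [h1, inner_add_right]; simp
    have h3 : (⟪G₁ u, u⟫_ℂ).re = (⟪u, G₁ u⟫_ℂ).re := by
      have h := congrArg Complex.re (inner_conj_symm u (G₁ u))
      simp only [Complex.conj_re] at h
      exact h
    have h4 : ε * ‖u‖ ^ 2 ≤ (⟪G₁ u, (1 + G₂ * G₁) u⟫_ℂ).re := by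
      rw [h2, h3]
      have := hG₁ u
      have := hG₂ (G₁ u)
      linarith
    calc ε * ‖u‖ ^ 2 ≤ (⟪G₁ u, (1 + G₂ * G₁) u⟫_ℂ).re := h4
      _ ≤ ‖(⟪G₁ u, (1 + G₂ * G₁) u⟫_ℂ)‖ := Complex.re_le_norm _
      _ ≤ ‖G₁ u‖ * ‖(1 + G₂ * G₁) u‖ := norm_inner_le_norm _ _
  refine ⟨key, fun γ hγ u => ?_⟩
  rcases eq_or_lt_of_le ((norm_nonneg G₁).trans hγ) with hγ0 | hγ0
  · -- γ = 0 : then G₁ = 0 hence ‖u‖ = 0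
    have hG : ‖G₁‖ = 0 := le_antisymm (hγ.trans hγ0.ge) (norm_nonneg _)
    have hG1u : ‖G₁ u‖ = 0 := by
      have := G₁.le_opNorm u
      rw [hG, zero_mul] at this
      exact le_antisymm this (norm_nonneg _)
    have hb : (⟪u, G₁ u⟫_ℂ).re ≤ ‖u‖ * ‖G₁ u‖ :=
      le_trans (Complex.re_le_norm _)
        (by exact norm_inner_le_norm u (G₁ u))
    rw [hG1u, mul_zero] at hb
    have hu : ε * ‖u‖ ^ 2 ≤ 0 := le_trans (hG₁ u) hb
    have hsq : ‖u‖ ^ 2 = 0 :=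
      le_antisymm (by nlinarith [sq_nonneg ‖u‖]) (sq_nonneg _)
    have hu0 : ‖u‖ = 0 := by
      have := pow_eq_zero_iff (n := 2) (by norm_num) |>.mp hsq
      simpa using this
    simp [hu0, ← hγ0, norm_nonneg]
  · have h1 : ‖G₁ u‖ ≤ γ * ‖u‖ :=
      (G₁.le_opNorm u).trans (by gcongr)
    have h2 := key u
    rw [ge_iff_le, div_mul_eq_mul_div, div_le_iff₀ hγ0]
    rcases (norm_nonneg u).eq_or_lt with h0 | h0
    · rw [← h0, mul_zero]
      positivity
    · nlinarith [mul_le_mul_of_nonneg_right h1 (norm_nonneg ((1 + G₂ * G₁) u))]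
end

section
/- Let G₁ and G₂ be n×n complex matrices such that G₁ + G₁ᴴ is positive semidefinite and G₂ + G₂ᴴ is positive definite. Then the matrix 1 + G₂ * G₁ is invertible. -/
open scoped Matrix ComplexOrder

/-- Pointwise passivity theorem: if `G₁ + G₁ᴴ` is positive semidefinite and
`G₂ + G₂ᴴ` is positive definite, then `1 + G₂G₁` is invertible. -/
theorem passive_feedback_matrix_invertible
    {n : ℕ} (G₁ G₂ : Matrix (Fin n) (Fin n) ℂ)
    (h₁ : (G₁ + G₁ᴴ).PosSemidef) (h₂ : (G₂ + G₂ᴴ).PosDef) :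
    IsUnit (1 + G₂ * G₁) := by
  rw [← Matrix.mulVec_injective_iff_isUnit]
  have key : ∀ x, (1 + G₂ * G₁) *ᵥ x = 0 → x = 0 := by
    intro x hx
    set y := G₁ *ᵥ x with hy
    have hxv : x = -(G₂ *ᵥ y) := by
      rw [Matrix.add_mulVec, Matrix.one_mulVec, ← Matrix.mulVec_mulVec] at hx
      exact eq_neg_of_add_eq_zero_left hx
    -- second term rewriting
    have hsy : star y ⬝ᵥ x = star x ⬝ᵥ (G₁ᴴ *ᵥ x) := by
      rw [hy, Matrix.star_mulVec, Matrix.dotProduct_mulVec]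
    have ha : star x ⬝ᵥ ((G₁ + G₁ᴴ) *ᵥ x) = star x ⬝ᵥ y + star y ⬝ᵥ x := by
      rw [Matrix.add_mulVec, dotProduct_add, hsy, hy]
    have hxy : star x ⬝ᵥ y = -(star y ⬝ᵥ (G₂ᴴ *ᵥ y)) := by
      rw [hxv, star_neg, neg_dotProduct, Matrix.star_mulVec]
      simp [hy, Matrix.dotProduct_mulVec]
    have hyx : star y ⬝ᵥ x = -(star y ⬝ᵥ (G₂ *ᵥ y)) := by
      rw [hxv, dotProduct_neg]
    have hb : star y ⬝ᵥ ((G₂ + G₂ᴴ) *ᵥ y)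
        = -(star x ⬝ᵥ ((G₁ + G₁ᴴ) *ᵥ x)) := by
      rw [ha, Matrix.add_mulVec, dotProduct_add, hxy, hyx]
      ring
    have hb0 : star y ⬝ᵥ ((G₂ + G₂ᴴ) *ᵥ y) ≤ 0 := by
      rw [hb]
      simpa using h₁.dotProduct_mulVec_nonneg x
    have hy0 : y = 0 := by
      by_contra hne
      exact (h₂.dotProduct_mulVec_pos hne).not_ge hb0
    rw [hxv, hy0, Matrix.mulVec_zero, neg_zero]
  intro u v huv
  have := key (u - v) (by rw [Matrix.mulVec_sub, huv, sub_self])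
  exact sub_eq_zero.mp this
end

section
/- Let M be an n×n complex matrix such that M + Mᴴ is not positive semidefinite. Then there exists an n×n complex matrix G with G + Gᴴ positive definite such that 1 + G * M is not invertible (det(1 + G M) = 0). -/
open scoped Matrix ComplexOrder

open Matrix Complex

section Aux

variable {n : ℕ}

/-- View a vector as an element of Euclidean space. -/
noncomputable def toE (v : Fin n → ℂ) : EuclideanSpace ℂ (Fin n) :=
  (WithLp.equiv 2 _).symm v

lemma dot_eq_inner (a b : Fin n → ℂ) : star a ⬝ᵥ b = (inner ℂ (toE a) (toE b) : ℂ) := by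
  rw [EuclideanSpace.inner_eq_star_dotProduct, dotProduct_comm]; rfl

lemma aux_vecMulVec_mulVec (a b v : Fin n → ℂ) :
    vecMulVec a b *ᵥ v = (b ⬝ᵥ v) • a := by
  funext i
  simp only [mulVec, dotProduct, vecMulVec_apply, Pi.smul_apply, smul_eq_mul, Finset.sum_mul]
  exact Finset.sum_congr rfl fun j _ => by ring

lemma dot_conjTranspose (A : Matrix (Fin n) (Fin n) ℂ) (v : Fin n → ℂ) :
    star v ⬝ᵥ (Aᴴ *ᵥ v) = star (star v ⬝ᵥ (A *ᵥ v)) := by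
  rw [star_dotProduct, star_mulVec, conjTranspose_conjTranspose, dotProduct_mulVec]

lemma mul_star_self_eq (a : ℂ) : a * star a = ((‖a‖ ^ 2 : ℝ) : ℂ) := by
  rw [Complex.star_def, Complex.mul_conj, Complex.normSq_eq_norm_sq]

lemma real_ineq (c zn d t u rr : ℝ) (hc : 0 < c) (hd : d * (2 * c) = zn ^ 2 + 2 * c)
    (ht : 0 ≤ t) (hu : 0 ≤ u) (hzn : 0 ≤ zn) (hr : -(t * (u * zn)) ≤ rr)
    (hpos : 0 < t ∨ 0 < u) :
    0 < 2 * (t ^ 2 * c + rr) + 2 * d * (t ^ 2 + u ^ 2 - t ^ 2) := by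
  have h5 : d * (2 * c) * u ^ 2 = (zn ^ 2 + 2 * c) * u ^ 2 := by rw [hd]
  have h6 : c * (-(t * (u * zn))) ≤ c * rr := mul_le_mul_of_nonneg_left hr hc.le
  rcases hpos with hp | hp
  · nlinarith [sq_nonneg (c * t - zn * u), mul_pos (mul_pos hc hp) hp, sq_nonneg u, h5, h6,
      mul_nonneg (mul_nonneg hc.le hu) hu]
  · nlinarith [sq_nonneg (c * t - zn * u), mul_pos (mul_pos hc hp) hp, sq_nonneg t, h5, h6,
      mul_nonneg (mul_nonneg hc.le ht) ht]

/-- Key construction: given a unit vector `y` and a target `z` with `Re⟪y,z⟫ > 0`,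
there is a matrix `G` with `G + Gᴴ` positive definite and `G y = z`. -/
lemma key (y z : Fin n → ℂ) (hy : star y ⬝ᵥ y = 1) (hc : 0 < (star y ⬝ᵥ z).re) :
    ∃ G : Matrix (Fin n) (Fin n) ℂ, (G + Gᴴ).PosDef ∧ G *ᵥ y = z := by
  set c : ℝ := (star y ⬝ᵥ z).re with hcdef
  set Z : EuclideanSpace ℂ (Fin n) := toE z with hZ
  set Y : EuclideanSpace ℂ (Fin n) := toE y with hY
  set δ : ℝ := ‖Z‖ ^ 2 / (2 * c) + 1 with hδdef
  have hδc : δ * (2 * c) = ‖Z‖ ^ 2 + 2 * c := by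
    rw [hδdef, add_mul, div_mul_cancel₀ _ (mul_pos two_pos hc).ne', one_mul]
  have hY2 : ‖Y‖ ^ 2 = 1 := by
    have h1 : (inner ℂ Y Y : ℂ) = 1 := by rw [hY, ← dot_eq_inner, hy]
    rw [inner_self_eq_norm_sq_to_K] at h1
    have h2 : ((‖Y‖ ^ 2 : ℝ) : ℂ) = ((1 : ℝ) : ℂ) := by push_cast; exact h1
    exact_mod_cast h2
  set G : Matrix (Fin n) (Fin n) ℂ :=
    vecMulVec z (star y) + (δ : ℂ) • (1 - vecMulVec y (star y)) with hG
  have hGy : G *ᵥ y = z := by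
    rw [hG, add_mulVec, smul_mulVec, sub_mulVec, one_mulVec,
      aux_vecMulVec_mulVec, aux_vecMulVec_mulVec, hy]
    simp
  refine ⟨G, Matrix.PosDef.of_dotProduct_mulVec_pos (Matrix.isHermitian_add_transpose_self _) ?_, hGy⟩
  intro v hv
  set V : EuclideanSpace ℂ (Fin n) := toE v with hV
  have hVne : V ≠ 0 := by simpa [hV, toE] using hv
  set a : ℂ := star y ⬝ᵥ v with ha
  set b : ℂ := star v ⬝ᵥ z with hb
  have hsva : star v ⬝ᵥ y = star a := by
    rw [ha, star_dotProduct]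
  have hN : star v ⬝ᵥ v = ((‖V‖ ^ 2 : ℝ) : ℂ) := by
    rw [dot_eq_inner, ← hV, inner_self_eq_norm_sq_to_K]
    norm_cast
  have hp : star v ⬝ᵥ (G *ᵥ v)
      = a * b + (δ : ℂ) * (((‖V‖ ^ 2 : ℝ) : ℂ) - ((‖a‖ ^ 2 : ℝ) : ℂ)) := by
    rw [hG, add_mulVec, smul_mulVec, sub_mulVec, one_mulVec,
      aux_vecMulVec_mulVec, aux_vecMulVec_mulVec, dotProduct_add,
      dotProduct_smul, dotProduct_smul, dotProduct_sub, dotProduct_smul,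
      hsva, hN, ← ha, ← hb, ← mul_star_self_eq]
    simp only [smul_eq_mul]
  have hQF : star v ⬝ᵥ ((G + Gᴴ) *ᵥ v)
      = ((2 * (a * b).re + 2 * δ * (‖V‖ ^ 2 - ‖a‖ ^ 2) : ℝ) : ℂ) := by
    rw [add_mulVec, dotProduct_add, dot_conjTranspose, hp, star_add]
    have hsT : star ((δ : ℂ) * (((‖V‖ ^ 2 : ℝ) : ℂ) - ((‖a‖ ^ 2 : ℝ) : ℂ)))
        = (δ : ℂ) * (((‖V‖ ^ 2 : ℝ) : ℂ) - ((‖a‖ ^ 2 : ℝ) : ℂ)) := by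
      simp [Complex.star_def, ← Complex.ofReal_sub, ← Complex.ofReal_mul]
    rw [hsT]
    have hab : a * b + star (a * b) = ((2 * (a * b).re : ℝ) : ℂ) := by
      rw [Complex.star_def, Complex.add_conj]
    rw [show a * b + (δ : ℂ) * (((‖V‖ ^ 2 : ℝ) : ℂ) - ((‖a‖ ^ 2 : ℝ) : ℂ))
          + (star (a * b) + (δ : ℂ) * (((‖V‖ ^ 2 : ℝ) : ℂ) - ((‖a‖ ^ 2 : ℝ) : ℂ)))
        = (a * b + star (a * b))
          + 2 * ((δ : ℂ) * (((‖V‖ ^ 2 : ℝ) : ℂ) - ((‖a‖ ^ 2 : ℝ) : ℂ))) from by ring, hab]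
    push_cast
    ring
  rw [hQF, Complex.zero_lt_real]
  -- now a real inequality
  set W : EuclideanSpace ℂ (Fin n) := V - a • Y with hW
  have hYY : (inner ℂ Y Y : ℂ) = 1 := by rw [hY, ← dot_eq_inner, hy]
  have haV : (inner ℂ Y V : ℂ) = a := by rw [hY, hV, ← dot_eq_inner, ha]
  have hYW : (inner ℂ Y W : ℂ) = 0 := by
    rw [hW, inner_sub_right, inner_smul_right, hYY, haV]
    ring
  have hVdec : V = a • Y + W := by rw [hW]; abel
  have hnorm : ‖V‖ ^ 2 = ‖a‖ ^ 2 + ‖W‖ ^ 2 := by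
    rw [hVdec, norm_add_sq (𝕜 := ℂ), inner_smul_left, hYW, mul_zero, norm_smul]
    simp [mul_pow, hY2]
  have hbdec : b = star a * (inner ℂ Y Z : ℂ) + (inner ℂ W Z : ℂ) := by
    have h1 : b = (inner ℂ V Z : ℂ) := by rw [hb, dot_eq_inner, ← hV, ← hZ]
    rw [h1, hVdec, inner_add_left, inner_smul_left, Complex.star_def]
  have hcYZ : (inner ℂ Y Z : ℂ).re = c := by rw [hY, hZ, ← dot_eq_inner, hcdef]
  have habre : (a * b).re = ‖a‖ ^ 2 * c + (a * (inner ℂ W Z : ℂ)).re := by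
    rw [hbdec, mul_add, ← mul_assoc, mul_star_self_eq, Complex.add_re,
      Complex.re_ofReal_mul, hcYZ]
  have hcross : -(‖a‖ * (‖W‖ * ‖Z‖)) ≤ (a * (inner ℂ W Z : ℂ)).re := by
    have h1 : |(a * (inner ℂ W Z : ℂ)).re| ≤ ‖a * (inner ℂ W Z : ℂ)‖ :=
      Complex.abs_re_le_norm _
    have h2 : ‖a * (inner ℂ W Z : ℂ)‖ = ‖a‖ * ‖(inner ℂ W Z : ℂ)‖ := norm_mul _ _
    have h3 : ‖(inner ℂ W Z : ℂ)‖ ≤ ‖W‖ * ‖Z‖ := norm_inner_le_norm _ _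
    have h4 : ‖a‖ * ‖(inner ℂ W Z : ℂ)‖ ≤ ‖a‖ * (‖W‖ * ‖Z‖) :=
      mul_le_mul_of_nonneg_left h3 (norm_nonneg _)
    nlinarith [abs_nonneg (a * (inner ℂ W Z : ℂ)).re, neg_abs_le (a * (inner ℂ W Z : ℂ)).re]
  have hpos : 0 < ‖a‖ ∨ 0 < ‖W‖ := by
    by_contra hcon
    push_neg at hcon
    have h1 : a = 0 := norm_eq_zero.mp (le_antisymm hcon.1 (norm_nonneg a))
    have h2 : W = 0 := norm_eq_zero.mp (le_antisymm hcon.2 (norm_nonneg W))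
    exact hVne (by rw [hVdec, h1, h2]; simp)
  rw [habre, hnorm]
  exact real_ineq c ‖Z‖ δ ‖a‖ ‖W‖ _ hc hδc (norm_nonneg _) (norm_nonneg _)
    (norm_nonneg _) hcross hpos

end Aux

/-- Pointwise converse passivity: if `M + Mᴴ` is not positive semidefinite, then
some input strictly passive `G` (i.e. `G + Gᴴ` positive definite) makes
`1 + G M` singular. -/
theorem converse_passivity_pointwise
    {n : ℕ} (M : Matrix (Fin n) (Fin n) ℂ) (h : ¬ (M + Mᴴ).PosSemidef) :
    ∃ G : Matrix (Fin n) (Fin n) ℂ, (G + Gᴴ).PosDef ∧ (1 + G * M).det = 0 := by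
  rw [Matrix.posSemidef_iff_dotProduct_mulVec] at h
  push_neg at h
  obtain ⟨x₀, hx₀⟩ := h (Matrix.isHermitian_add_transpose_self M)
  set p : ℂ := star x₀ ⬝ᵥ (M *ᵥ x₀) with hp
  have hq : star x₀ ⬝ᵥ ((M + Mᴴ) *ᵥ x₀) = p + star p := by
    rw [add_mulVec, dotProduct_add, dot_conjTranspose, hp]
  have hpre : p.re < 0 := by
    rw [hq] at hx₀
    have h1 : p + star p = ((2 * p.re : ℝ) : ℂ) := by
      rw [Complex.star_def, Complex.add_conj]
    rw [h1, Complex.zero_le_real] at hx₀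
    linarith [not_le.mp hx₀]
  clear hx₀ h
  have hx0ne : x₀ ≠ 0 := by
    intro h0; rw [h0] at hp; simp [hp] at hpre
  have hy0ne : M *ᵥ x₀ ≠ 0 := by
    intro h0; rw [h0] at hp; simp [hp] at hpre
  set r : ℝ := ‖toE (M *ᵥ x₀)‖ with hr
  have hrpos : 0 < r := by
    rw [hr, norm_pos_iff]
    simpa [toE] using hy0ne
  have hrne : (r : ℂ) ≠ 0 := by exact_mod_cast hrpos.ne'
  set x : Fin n → ℂ := ((r : ℂ))⁻¹ • x₀ with hx
  set y : Fin n → ℂ := M *ᵥ x with hydef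
  have hy0 : y = ((r : ℂ))⁻¹ • (M *ᵥ x₀) := by rw [hydef, hx, mulVec_smul]
  have hyy₀ : star (M *ᵥ x₀) ⬝ᵥ (M *ᵥ x₀) = ((r ^ 2 : ℝ) : ℂ) := by
    rw [dot_eq_inner, inner_self_eq_norm_sq_to_K]
    push_cast; rfl
  have hstarp : star (M *ᵥ x₀) ⬝ᵥ x₀ = star p := by
    rw [hp, star_dotProduct]
  have hyunit : star y ⬝ᵥ y = 1 := by
    rw [hy0, star_smul, smul_dotProduct, dotProduct_smul, hyy₀]
    simp only [star_inv₀, Complex.star_def, Complex.conj_ofReal, smul_eq_mul]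
    field_simp
    push_cast; ring
  have hcpos : 0 < (star y ⬝ᵥ (-x)).re := by
    have h1 : star y ⬝ᵥ (-x)
        = -(((r : ℂ))⁻¹ * (((r : ℂ))⁻¹ * star p)) := by
      rw [hy0, hx, star_smul, smul_dotProduct, dotProduct_neg, dotProduct_smul, hstarp]
      simp only [star_inv₀, Complex.star_def, Complex.conj_ofReal, smul_eq_mul]
      ring
    rw [h1]
    have h2 : ((r : ℂ))⁻¹ * (((r : ℂ))⁻¹ * star p) = ((r⁻¹ * r⁻¹ : ℝ) : ℂ) * star p := by
      push_cast; ring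
    rw [h2, Complex.star_def, Complex.neg_re, Complex.re_ofReal_mul, Complex.conj_re]
    have h3 : 0 < r⁻¹ * r⁻¹ := by positivity
    have h4 := mul_neg_of_pos_of_neg h3 hpre
    linarith
  obtain ⟨G, hGpd, hGy⟩ := key y (-x) hyunit hcpos
  refine ⟨G, hGpd, ?_⟩
  rw [← Matrix.exists_mulVec_eq_zero_iff]
  refine ⟨x, ?_, ?_⟩
  · rw [hx]
    exact smul_ne_zero (inv_ne_zero hrne) hx0ne
  · rw [add_mulVec, one_mulVec, ← mulVec_mulVec, ← hydef, hGy]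
    simp
end

section
/- Let θ ∈ ℝ and let G₁, G₂ be n×n complex matrices. Suppose e^{−iθ}·G₁ + e^{iθ}·G₁ᴴ is negative definite and e^{iθ}·G₂ + e^{−iθ}·G₂ᴴ is positive semidefinite. Then the matrix 1 − G₂ * G₁ is invertible. -/
open scoped Matrix ComplexOrder

lemma rp_helper {n : ℕ} (M : Matrix (Fin n) (Fin n) ℂ) (v : Fin n → ℂ) :
    star v ⬝ᵥ Mᴴ.mulVec v = star (star v ⬝ᵥ M.mulVec v) := by
  simp only [dotProduct, Matrix.mulVec, Matrix.conjTranspose_apply, Pi.star_apply,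
    star_sum, star_mul', star_star, Finset.mul_sum]
  rw [Finset.sum_comm]
  refine Finset.sum_congr rfl fun i _ => Finset.sum_congr rfl fun j _ => by ring

/-- Pointwise frequency-weighted (rotated) passivity theorem: if
`e^{−iθ}G₁ + e^{iθ}G₁ᴴ` is negative definite and `e^{iθ}G₂ + e^{−iθ}G₂ᴴ` is
positive semidefinite, then `1 − G₂G₁` is invertible. -/
theorem rotated_passivity_pointwise
    {n : ℕ} (θ : ℝ) (G₁ G₂ : Matrix (Fin n) (Fin n) ℂ)
    (h₁ : (-(Complex.exp (-(θ : ℂ) * Complex.I) • G₁ +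
        Complex.exp ((θ : ℂ) * Complex.I) • G₁ᴴ)).PosDef)
    (h₂ : (Complex.exp ((θ : ℂ) * Complex.I) • G₂ +
        Complex.exp (-(θ : ℂ) * Complex.I) • G₂ᴴ).PosSemidef) :
    IsUnit (1 - G₂ * G₁) := by
  set c : ℂ := Complex.exp ((θ : ℂ) * Complex.I)
  set c' : ℂ := Complex.exp (-(θ : ℂ) * Complex.I)
  rw [Matrix.isUnit_iff_isUnit_det, isUnit_iff_ne_zero]
  intro hdet
  obtain ⟨x, hx0, hx⟩ := Matrix.exists_mulVec_eq_zero_iff.mpr hdet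
  -- x = G₂ (G₁ x)
  have hxy : x = G₂.mulVec (G₁.mulVec x) := by
    have := hx
    rw [Matrix.sub_mulVec, Matrix.one_mulVec, sub_eq_zero] at this
    rw [Matrix.mulVec_mulVec]; exact this
  set y : Fin n → ℂ := G₁.mulVec x with hy
  set a : ℂ := star x ⬝ᵥ y with ha
  -- strict negativity from h₁
  have ht : 0 < -(c' * a + c * star a) := by
    have := (Matrix.posDef_iff_dotProduct_mulVec.mp h₁).2 (x := x) hx0
    rw [Matrix.neg_mulVec, dotProduct_neg, Matrix.add_mulVec,
      Matrix.smul_mulVec, Matrix.smul_mulVec, dotProduct_add,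
      dotProduct_smul, dotProduct_smul, rp_helper] at this
    simpa [smul_eq_mul, ha, hy] using this
  -- nonnegativity from h₂
  have hs : 0 ≤ c * star a + c' * a := by
    have := (Matrix.posSemidef_iff_dotProduct_mulVec.mp h₂).2 y
    rw [Matrix.add_mulVec, Matrix.smul_mulVec, Matrix.smul_mulVec,
      dotProduct_add, dotProduct_smul, dotProduct_smul,
      rp_helper] at this
    have hyx : star y ⬝ᵥ G₂.mulVec y = star a := by
      rw [← hxy, Matrix.star_dotProduct, ← ha]
    rw [hyx] at this
    simpa [smul_eq_mul, star_star] using this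
  have : (0 : ℂ) < 0 := by
    calc (0 : ℂ) ≤ c * star a + c' * a := hs
    _ < 0 := by linarith [ht]
  exact lt_irrefl _ this
end

section
/- Let H and K be complex Hilbert spaces and M : H →L[ℂ] K a bounded linear operator with ‖M‖ > 1. Then there exists a bounded linear operator Δ : K →L[ℂ] H with ‖Δ‖ < 1 and a nonzero vector u ∈ H such that Δ (M u) = u; in particular, the operator 1 − Δ∘M is not injective. -/
set_option synthInstance.maxHeartbeats 800000
set_option maxHeartbeats 800000


/-- Small-gain converse, destabilizing-uncertainty construction: if `‖M‖ > 1`,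
there exists `Δ` with `‖Δ‖ < 1` and a nonzero `u` with `Δ(Mu) = u`; in
particular `1 − Δ∘M` is not injective. -/
theorem small_gain_converse_destabilizing_uncertainty
    {H K : Type*} [NormedAddCommGroup H] [InnerProductSpace ℂ H] [CompleteSpace H]
    [NormedAddCommGroup K] [InnerProductSpace ℂ K] [CompleteSpace K]
    (M : H →L[ℂ] K) (hM : 1 < ‖M‖) :
    ∃ Δ : K →L[ℂ] H, ‖Δ‖ < 1 ∧ ∃ u : H, u ≠ 0 ∧ Δ (M u) = u ∧
      ¬ Function.Injective ⇑(ContinuousLinearMap.id ℂ H - Δ.comp M) := by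
  obtain ⟨u, hu⟩ := M.exists_mul_lt_of_lt_opNorm zero_le_one hM
  rw [one_mul] at hu
  have hu0 : u ≠ 0 := by
    rintro rfl; simp at hu
  have hMu : (0:ℝ) < ‖M u‖ := lt_of_le_of_lt (norm_nonneg u) hu
  set c : ℝ := (‖M u‖ ^ 2)⁻¹
  set Δ : K →L[ℂ] H := c • ((innerSL ℂ (M u)).smulRight u) with hΔ
  have hΔMu : Δ (M u) = u := by
    simp only [hΔ, ContinuousLinearMap.smul_apply, ContinuousLinearMap.smulRight_apply,
      innerSL_apply_apply]
    have key : (inner ℂ (M u) (M u) : ℂ) = ((‖M u‖ ^ 2 : ℝ) : ℂ) := by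
      exact_mod_cast inner_self_eq_norm_sq_to_K (M u)
    rw [key, ← smul_assoc, Complex.real_smul, ← Complex.ofReal_mul]
    simp only [c]
    rw [inv_mul_cancel₀ (by positivity : (0:ℝ) < ‖M u‖ ^ 2).ne', Complex.ofReal_one, one_smul]
  refine ⟨Δ, ?_, u, hu0, hΔMu, ?_⟩
  · have h1 : ‖Δ‖ ≤ c * (‖M u‖ * ‖u‖) := by
      rw [hΔ]
      calc ‖c • ((innerSL ℂ (M u)).smulRight u)‖
          ≤ ‖c‖ * ‖(innerSL ℂ (M u)).smulRight u‖ := ContinuousLinearMap.opNorm_smul_le _ _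
        _ = c * (‖M u‖ * ‖u‖) := by
            rw [ContinuousLinearMap.norm_smulRight_apply, innerSL_apply_norm,
              Real.norm_eq_abs, abs_of_nonneg (by positivity)]
    have : c * (‖M u‖ * ‖u‖) = ‖u‖ / ‖M u‖ := by
      field_simp [c]; exact inv_mul_cancel₀ (pow_ne_zero 2 hMu.ne')
    rw [this] at h1
    exact lt_of_le_of_lt h1 ((div_lt_one hMu).2 hu)
  · intro hinj
    have : (ContinuousLinearMap.id ℂ H - Δ.comp M) u =
        (ContinuousLinearMap.id ℂ H - Δ.comp M) 0 := by
      simp [hΔMu]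
    exact hu0 (hinj this)
end

section
/- Let n ≥ 1 and let y, z ∈ ℂⁿ (Euclidean space) with y ≠ 0 and re⟪y, z⟫ > 0. Then there exists an n×n complex matrix G such that G + Gᴴ is positive definite and G.mulVec y = z. -/
open scoped InnerProductSpace Matrix ComplexOrder

private lemma vecMulVec_mulVec' {n : ℕ} (u v x : Fin n → ℂ) :
    (Matrix.vecMulVec u v).mulVec x = (dotProduct v x) • u := by
  funext i
  simp [Matrix.mulVec, Matrix.vecMulVec_apply, dotProduct, Finset.mul_sum,
    mul_comm, mul_assoc, mul_left_comm]

private lemma vecMulVec_conjTranspose' {n : ℕ} (u v : Fin n → ℂ) :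
    (Matrix.vecMulVec u v)ᴴ = Matrix.vecMulVec (star v) (star u) := by
  ext i j; simp [Matrix.conjTranspose_apply, Matrix.vecMulVec_apply, mul_comm]

private lemma posDef_real_smul_one {n : ℕ} {c : ℝ} (hc : 0 < c) :
    ((c : ℂ) • (1 : Matrix (Fin n) (Fin n) ℂ)).PosDef := by
  have : (c : ℂ) • (1 : Matrix (Fin n) (Fin n) ℂ) = Matrix.diagonal (fun _ => (c : ℂ)) := by
    ext i j
    by_cases h : i = j <;> simp [Matrix.one_apply, Matrix.diagonal, Matrix.smul_apply, h]
  rw [this]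
  exact Matrix.posDef_diagonal_iff.mpr fun i => by exact_mod_cast hc

/-- Interpolation by an input strictly passive matrix: given `y ≠ 0` with
`re⟪y, z⟫ > 0`, there is a matrix `G` with `G + Gᴴ` positive definite and
`G y = z`. -/
theorem input_strictly_passive_interpolation
    {n : ℕ} (hn : 1 ≤ n) (y z : EuclideanSpace ℂ (Fin n)) (hy : y ≠ 0)
    (hyz : 0 < (⟪y, z⟫_ℂ).re) :
    ∃ G : Matrix (Fin n) (Fin n) ℂ, (G + Gᴴ).PosDef ∧
      (WithLp.toLp 2 (G.mulVec y) : EuclideanSpace ℂ (Fin n)) = z := by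
  classical
  set N : ℝ := (⟪y, y⟫_ℂ).re with hNdef
  have hyy_ne : ⟪y, y⟫_ℂ ≠ 0 := inner_self_ne_zero.mpr hy
  have him : (⟪y, y⟫_ℂ).im = 0 := inner_self_im (𝕜 := ℂ) y
  have hN : 0 < N := by
    rcases lt_or_eq_of_le (inner_self_nonneg (𝕜 := ℂ) (x := y)) with h | h
    · exact h
    · exact absurd (Complex.ext h.symm him) hyy_ne
  have hNne : (N : ℂ) ≠ 0 := by exact_mod_cast hN.ne'
  set α : ℝ := (⟪y, z⟫_ℂ).re / N with hαdef
  have hα : 0 < α := div_pos hyz hN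
  set β : ℝ := (⟪y, z⟫_ℂ).im with hβdef
  set w : Fin n → ℂ := (z : Fin n → ℂ) - (α : ℂ) • (y : Fin n → ℂ) with hwdef
  set μ : ℂ := -((β / N ^ 2 : ℝ) : ℂ) * Complex.I with hμdef
  -- dot product facts
  have hinner_yy : dotProduct (star (y : Fin n → ℂ)) (y : Fin n → ℂ) = (N : ℂ) := by
    have : ⟪y, y⟫_ℂ = dotProduct (star (y : Fin n → ℂ)) (y : Fin n → ℂ) := by
      rw [EuclideanSpace.inner_eq_star_dotProduct, dotProduct_comm]
    rw [← this]
    exact Complex.ext rfl him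
  have hinner_yz : dotProduct (star (y : Fin n → ℂ)) (z : Fin n → ℂ) = ⟪y, z⟫_ℂ := by
    rw [EuclideanSpace.inner_eq_star_dotProduct, dotProduct_comm]
  have hyw : dotProduct (star (y : Fin n → ℂ)) w = (β : ℂ) * Complex.I := by
    rw [hwdef, dotProduct_sub, dotProduct_smul, hinner_yz, hinner_yy]
    rw [smul_eq_mul, hαdef]
    apply Complex.ext <;>
      simp [Complex.ext_iff, div_mul_cancel₀, hN.ne', hβdef]
  have hwy : dotProduct (star w) (y : Fin n → ℂ) = -((β : ℂ) * Complex.I) := by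
    have hsw : dotProduct (star w) (y : Fin n → ℂ)
        = star (dotProduct (star (y : Fin n → ℂ)) w) := by
      simp [dotProduct, mul_comm]
    rw [hsw, hyw]
    simp [Complex.conj_ofReal]
  -- the matrix
  set S : Matrix (Fin n) (Fin n) ℂ :=
    ((1 / N : ℝ) : ℂ) • (Matrix.vecMulVec w (star (y : Fin n → ℂ))
        - Matrix.vecMulVec (y : Fin n → ℂ) (star w))
      + μ • Matrix.vecMulVec (y : Fin n → ℂ) (star (y : Fin n → ℂ)) with hSdef
  set G : Matrix (Fin n) (Fin n) ℂ := ((α : ℝ) : ℂ) • 1 + S with hGdef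
  have h3 : (Matrix.vecMulVec w (star (y : Fin n → ℂ)))ᴴ
      = Matrix.vecMulVec (y : Fin n → ℂ) (star w) := by
    rw [vecMulVec_conjTranspose', star_star]
  have h4 : (Matrix.vecMulVec (y : Fin n → ℂ) (star w))ᴴ
      = Matrix.vecMulVec w (star (y : Fin n → ℂ)) := by
    rw [vecMulVec_conjTranspose', star_star]
  have h5 : (Matrix.vecMulVec (y : Fin n → ℂ) (star (y : Fin n → ℂ)))ᴴ
      = Matrix.vecMulVec (y : Fin n → ℂ) (star (y : Fin n → ℂ)) := by
    rw [vecMulVec_conjTranspose', star_star]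
  have h1 : star (((1 / N : ℝ)) : ℂ) = (((1 / N : ℝ)) : ℂ) := Complex.conj_ofReal _
  have h2 : star μ = -μ := by
    rw [hμdef]; simp [Complex.conj_ofReal]
  have hSH : Sᴴ = -S := by
    rw [hSdef, Matrix.conjTranspose_add, Matrix.conjTranspose_smul, Matrix.conjTranspose_smul,
      Matrix.conjTranspose_sub, h3, h4, h5, h1, h2]
    module
  have hGH : Gᴴ = ((α : ℝ) : ℂ) • 1 - S := by
    rw [hGdef, Matrix.conjTranspose_add, Matrix.conjTranspose_smul, Matrix.conjTranspose_one,
      hSH]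
    rw [show (star ((α : ℝ) : ℂ) = ((α : ℝ) : ℂ)) from Complex.conj_ofReal _]
    rw [sub_eq_add_neg]
  refine ⟨G, ?_, ?_⟩
  · have : G + Gᴴ = (((2 * α : ℝ)) : ℂ) • (1 : Matrix (Fin n) (Fin n) ℂ) := by
      rw [hGH, hGdef]
      push_cast
      rw [two_mul, add_smul]
      abel
    rw [this]
    exact posDef_real_smul_one (by linarith)
  · rw [hGdef, hSdef]
    rw [Matrix.add_mulVec, Matrix.smul_mulVec, Matrix.one_mulVec, Matrix.add_mulVec,
      Matrix.smul_mulVec, Matrix.smul_mulVec, Matrix.sub_mulVec,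
      vecMulVec_mulVec', vecMulVec_mulVec', vecMulVec_mulVec', hinner_yy, hwy]
    ext i
    simp only [PiLp.toLp_apply, Pi.add_apply, Pi.smul_apply, Pi.sub_apply, smul_eq_mul, hwdef, hμdef]
    push_cast
    field_simp
    ring
end
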